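/- Let P be a two-orbit n-polytope in class 2_I with base flag Φ, and let -1 ≤ r ≤ s ≤ n, J = N \ {r+1,...,s-1}. Then the subgroup Γ_J (the stabilizer of Φ_J) acts flag-transitively on the section Φ_s/Φ_r if and only if {r+1,...,s-1} ⊆ I; and in that case Φ_s/Φ_r is a regular polytope. -/

import Mathlib

/-- An abstract polytope of rank `n`, presented by a partially ordered type of faces
with a strictly monotone rank function onto `{-1, 0, ..., n}`, such that every flag
(maximal chain) has exactly one face of each rank (`faceAt`), every flag has a unique
`i`-adjacent flag for each `i = 0, ..., n-1` (the diamond condition, via `adj`), and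
which is strongly flag-connected. -/
structure AbstractPolytope (n : ℕ) (Face : Type*) [PartialOrder Face] where
  rank : Face → ℤ
  rank_strictMono : ∀ {F G : Face}, F < G → rank F < rank G
  rank_le : ∀ F : Face, -1 ≤ rank F ∧ rank F ≤ (n : ℤ)
  /-- the unique face of rank `i` in the flag `Φ`, for `-1 ≤ i ≤ n` -/
  faceAt : Flag Face → ℤ → Face
  faceAt_mem : ∀ (Φ : Flag Face) (i : ℤ), -1 ≤ i → i ≤ (n : ℤ) → faceAt Φ i ∈ Φ
  faceAt_rank : ∀ (Φ : Flag Face) (i : ℤ), -1 ≤ i → i ≤ (n : ℤ) → rank (faceAt Φ i) = i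
  faceAt_eq : ∀ (Φ : Flag Face) (F : Face), F ∈ Φ → faceAt Φ (rank F) = F
  /-- the unique `i`-adjacent flag of `Φ`, for `0 ≤ i ≤ n-1` -/
  adj : Flag Face → ℕ → Flag Face
  adj_ne : ∀ (Φ : Flag Face) (i : ℕ), i < n → adj Φ i ≠ Φ
  adj_mem : ∀ (Φ : Flag Face) (i : ℕ), i < n →
    ∀ F ∈ Φ, rank F ≠ (i : ℤ) → F ∈ adj Φ i
  adj_unique : ∀ (Φ Ψ : Flag Face) (i : ℕ), i < n → Ψ ≠ Φ →
    (∀ F ∈ Φ, rank F ≠ (i : ℤ) → F ∈ Ψ) → Ψ = adj Φ i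
  /-- strong flag-connectedness: any two flags are joined by a sequence of successively
  adjacent flags, with all adjacencies at ranks not occurring among their common faces -/
  connected : ∀ Φ Ψ : Flag Face, ∃ (l : ℕ) (c : ℕ → Flag Face), c 0 = Φ ∧ c l = Ψ ∧
    ∀ m < l, ∃ i : ℕ, i < n ∧ c (m + 1) = adj (c m) i ∧
      ∀ F : Face, F ∈ Φ → F ∈ Ψ → rank F ≠ (i : ℤ)

namespace AbstractPolytope

variable {n : ℕ} {Face : Type*} [PartialOrder Face]

/-- The automorphism group `Γ(P)`: order automorphisms of the set of faces.
It acts on flags via `Flag.map`; `g • Φ` denotes the image flag. -/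
instance : MulAction (Face ≃o Face) (Flag Face) where
  smul g Φ := Flag.map g Φ
  one_smul Φ := by
    show Flag.map 1 Φ = Φ
    ext x
    simp [Flag.map, Flag.ofIsMaxChain]
  mul_smul g h Φ := by
    show Flag.map (g * h) Φ = Flag.map g (Flag.map h Φ)
    ext x
    simp [Flag.map, Flag.ofIsMaxChain, Set.image_image]

lemma smul_flag_def (g : Face ≃o Face) (Φ : Flag Face) : g • Φ = Flag.map g Φ := rfl

/-- Two flags lie in the same orbit under the automorphism group. -/
def SameOrbit (Φ Ψ : Flag Face) : Prop := ∃ g : Face ≃o Face, g • Φ = Ψ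

/-- The polytope has exactly two orbits on flags. -/
def TwoOrbit (_A : AbstractPolytope n Face) : Prop :=
  ∃ Φ Ψ : Flag Face, ¬ SameOrbit Φ Ψ ∧ ∀ X : Flag Face, SameOrbit X Φ ∨ SameOrbit X Ψ

/-- `I` is the class type set of the two-orbit polytope `A`: it consists precisely of
those ranks `i ∈ {0,...,n-1}` such that every flag and its `i`-adjacent flag lie in the
same orbit; that is, `A` is in the class `2_I`. -/
def InClass (A : AbstractPolytope n Face) (I : Set ℕ) : Prop :=
  (∀ i ∈ I, i < n) ∧ ∀ i : ℕ, i < n → (i ∈ I ↔ ∀ Φ : Flag Face, SameOrbit Φ (A.adj Φ i))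

/-- The stabilizer in the automorphism group of a face `F`. -/
def faceStab (_A : AbstractPolytope n Face) (F : Face) : Subgroup (Face ≃o Face) where
  carrier := {g : Face ≃o Face | g F = F}
  one_mem' := rfl
  mul_mem' := by
    intro a b ha hb
    show (a * b) F = F
    rw [RelIso.mul_apply]
    rw [show b F = F from hb, show a F = F from ha]
  inv_mem' := by
    intro a ha
    show a⁻¹ F = F
    conv_lhs => rw [← show a F = F from ha]
    exact a.symm_apply_apply F

lemma mem_faceStab {A : AbstractPolytope n Face} {F : Face} {g : Face ≃o Face} :
    g ∈ A.faceStab F ↔ g F = F := Iff.rfl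

end AbstractPolytope

/-
By strong flag-connectedness, two flags containing `Φ_J` are joined by adjacencies of ranks in
`{r+1,…,s-1}`; when these ranks lie in `I`, each adjacency is realised by an automorphism, which
fixes `Φ_J` because an automorphism preserves ranks and a flag has one face of each rank.
Conversely, an element of `Γ_J` mapping `Φ` to its `k`-adjacent flag puts one flag in the orbit
of its `k`-adjacent flag, and with only two orbits this forces `k ∈ I`. A flag of the section
`Φ_s/Φ_r` extends to a flag of `P` through `Φ_J`, so an element of `Γ_J` relating two such
extensions restricts to an automorphism of the section.
-/

namespace Flag

variable {α : Type*} [PartialOrder α]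

lemma mem_smul_iff {g : α ≃o α} {Ψ : Flag α} {x : α} : x ∈ g • Ψ ↔ g.symm x ∈ Ψ := by
  constructor
  · rintro ⟨y, hy, rfl⟩
    simpa using hy
  · intro h
    exact ⟨_, h, g.apply_symm_apply x⟩

lemma apply_mem_smul {g : α ≃o α} {Ψ : Flag α} {x : α} (h : x ∈ Ψ) : g x ∈ g • Ψ :=
  ⟨x, h, rfl⟩

lemma mem_of_forall_le {Ψ : Flag α} {x : α} (h : ∀ y, x ≤ y) : x ∈ Ψ :=
  mem_iff_forall_le_or_ge.2 fun y _ => Or.inl (h y)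

lemma mem_of_forall_ge {Ψ : Flag α} {x : α} (h : ∀ y, y ≤ x) : x ∈ Ψ :=
  mem_iff_forall_le_or_ge.2 fun y _ => Or.inr (h y)

lemma exists_extend_interval {a b : α} (Φ : Flag α) (Φ' : Flag {x // a ≤ x ∧ x ≤ b}) :
    ∃ M : Flag α, (∀ F ∈ Φ, F ≤ a ∨ b ≤ F → F ∈ M) ∧ ∀ x, x.1 ∈ M ↔ x ∈ Φ' := by
  have hcross : ∀ F, F ≤ a ∨ b ≤ F → ∀ x : {x // a ≤ x ∧ x ≤ b}, F ≤ x.1 ∨ x.1 ≤ F := by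
    rintro F (hF | hF) x
    exacts [Or.inl (hF.trans x.2.1), Or.inr (x.2.2.trans hF)]
  have hchain : IsChain (· ≤ ·)
      (Subtype.val '' (Φ' : Set {x // a ≤ x ∧ x ≤ b}) ∪ {F | F ∈ Φ ∧ (F ≤ a ∨ b ≤ F)}) := by
    rintro _ (⟨x, hx, rfl⟩ | ⟨hFΦ, hF⟩) _ (⟨y, hy, rfl⟩ | ⟨hGΦ, hG⟩) -
    · exact Φ'.le_or_le hx hy
    · exact (hcross _ hG x).symm
    · exact hcross _ hF y
    · exact Φ.le_or_le hFΦ hGΦ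
  obtain ⟨M, hM⟩ := hchain.exists_subset_flag
  have hΦ'M : ∀ x ∈ Φ', x.1 ∈ M := fun x hx => hM (Or.inl ⟨x, hx, rfl⟩)
  refine ⟨M, fun F hFΦ hF => hM (Or.inr ⟨hFΦ, hF⟩), fun x => ⟨fun hx => ?_, hΦ'M x⟩⟩
  exact mem_iff_forall_le_or_ge.2 fun y hy => M.le_or_le hx (hΦ'M y hy)

end Flag

namespace OrderIso

variable {α : Type*} [PartialOrder α]

def restrictInterval (g : α ≃o α) {a b : α} (ha : g a = a) (hb : g b = b) :
    {x // a ≤ x ∧ x ≤ b} ≃o {x // a ≤ x ∧ x ≤ b} where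
  toEquiv := g.toEquiv.subtypeEquiv fun x => by
    change a ≤ x ∧ x ≤ b ↔ a ≤ g x ∧ g x ≤ b
    conv_rhs => rw [← ha, ← hb]
    rw [g.le_iff_le, g.le_iff_le]
  map_rel_iff' := g.le_iff_le

lemma restrictInterval_smul_eq (g : α ≃o α) {a b : α} (ha : g a = a) (hb : g b = b)
    {M₁ M₂ : Flag α} (hg : g • M₁ = M₂) {Φ' Ψ' : Flag {x // a ≤ x ∧ x ≤ b}}
    (h₁ : ∀ x, x.1 ∈ M₁ ↔ x ∈ Φ') (h₂ : ∀ x, x.1 ∈ M₂ ↔ x ∈ Ψ') :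
    g.restrictInterval ha hb • Φ' = Ψ' := by
  ext x
  rw [Flag.mem_coe_iff, Flag.mem_coe_iff, Flag.mem_smul_iff, ← h₁, ← h₂, ← hg,
    Flag.mem_smul_iff]
  rfl

end OrderIso

namespace AbstractPolytope

variable {n : ℕ} {Face : Type*} [PartialOrder Face] (A : AbstractPolytope n Face)

lemma eq_of_rank_eq {Ψ : Flag Face} {F G : Face} (hF : F ∈ Ψ) (hG : G ∈ Ψ)
    (h : A.rank F = A.rank G) : F = G := by
  rw [← A.faceAt_eq Ψ F hF, ← A.faceAt_eq Ψ G hG, h]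

lemma lt_of_rank_lt {Ψ : Flag Face} {F G : Face} (hF : F ∈ Ψ) (hG : G ∈ Ψ)
    (h : A.rank F < A.rank G) : F < G := by
  rcases Ψ.le_or_le hF hG with hFG | hGF
  · exact hFG.lt_of_ne (by rintro rfl; exact h.false)
  · rcases hGF.lt_or_eq with hGF | rfl
    · exact absurd (A.rank_strictMono hGF) h.asymm
    · exact absurd h (lt_irrefl _)

lemma le_of_rank_le {Ψ : Flag Face} {F G : Face} (hF : F ∈ Ψ) (hG : G ∈ Ψ)
    (h : A.rank F ≤ A.rank G) : F ≤ G :=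
  h.lt_or_eq.elim (fun h => (A.lt_of_rank_lt hF hG h).le) fun h => (A.eq_of_rank_eq hF hG h).le

lemma faceAt_le_faceAt (Φ : Flag Face) {i j : ℤ} (hi : -1 ≤ i) (hij : i ≤ j) (hj : j ≤ n) :
    A.faceAt Φ i ≤ A.faceAt Φ j :=
  A.le_of_rank_le (A.faceAt_mem Φ i hi (by omega)) (A.faceAt_mem Φ j (by omega) hj)
    (by rw [A.faceAt_rank Φ i hi (by omega), A.faceAt_rank Φ j (by omega) hj]; exact hij)

/-- The faces `Ψ_{-1} < Ψ_0 < ⋯ < Ψ_i` have strictly increasing images under `g`. -/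
lemma le_rank_apply_faceAt (g : Face ≃o Face) (Ψ : Flag Face) {i : ℤ} (hi : -1 ≤ i)
    (hin : i ≤ n) : i ≤ A.rank (g (A.faceAt Ψ i)) := by
  induction i, hi using Int.leInduction with
  | base => exact (A.rank_le _).1
  | succ i hi ih =>
    have hlt : A.faceAt Ψ i < A.faceAt Ψ (i + 1) :=
      A.lt_of_rank_lt (A.faceAt_mem Ψ i hi (by omega)) (A.faceAt_mem Ψ (i + 1) (by omega) hin)
        (by rw [A.faceAt_rank Ψ i hi (by omega), A.faceAt_rank Ψ (i + 1) (by omega) hin]; omega)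
    have := A.rank_strictMono (g.strictMono hlt)
    have := ih (by omega)
    omega

lemma rank_le_rank_apply (g : Face ≃o Face) (F : Face) : A.rank F ≤ A.rank (g F) := by
  obtain ⟨Ψ, hF⟩ := Flag.exists_mem F
  simpa only [A.faceAt_eq Ψ F hF] using
    A.le_rank_apply_faceAt g Ψ (A.rank_le F).1 (A.rank_le F).2

lemma rank_apply (g : Face ≃o Face) (F : Face) : A.rank (g F) = A.rank F := by
  have h := A.rank_le_rank_apply g.symm (g F)
  rw [g.symm_apply_apply] at h
  exact le_antisymm h (A.rank_le_rank_apply g F)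

lemma apply_eq_self_of_mem_smul (A : AbstractPolytope n Face) {g : Face ≃o Face}
    {Ψ : Flag Face} {F : Face} (hF : F ∈ Ψ) (hgF : F ∈ g • Ψ) : g F = F :=
  A.eq_of_rank_eq (Flag.apply_mem_smul hF) hgF (A.rank_apply g F)

lemma mem_of_mem_adj {Ψ : Flag Face} {i : ℕ} (hi : i < n) {F : Face}
    (hF : F ∈ A.adj Ψ i) (hFi : A.rank F ≠ i) : F ∈ Ψ := by
  obtain ⟨h₁, h₂⟩ := A.rank_le F
  have hmem : A.faceAt Ψ (A.rank F) ∈ A.adj Ψ i :=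
    A.adj_mem Ψ i hi _ (A.faceAt_mem Ψ _ h₁ h₂) (by rwa [A.faceAt_rank Ψ _ h₁ h₂])
  rw [A.eq_of_rank_eq hF hmem (A.faceAt_rank Ψ _ h₁ h₂).symm]
  exact A.faceAt_mem Ψ _ h₁ h₂

lemma adj_adj (Ψ : Flag Face) {i : ℕ} (hi : i < n) : A.adj (A.adj Ψ i) i = Ψ :=
  (A.adj_unique _ _ i hi (A.adj_ne Ψ i hi).symm fun _ hF hFi => A.mem_of_mem_adj hi hF hFi).symm

lemma smul_adj (g : Face ≃o Face) (Ψ : Flag Face) {i : ℕ} (hi : i < n) :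
    g • A.adj Ψ i = A.adj (g • Ψ) i := by
  refine A.adj_unique _ _ i hi (fun h => A.adj_ne Ψ i hi (smul_left_cancel g h)) ?_
  intro F hF hFi
  rw [Flag.mem_smul_iff] at hF ⊢
  refine A.adj_mem Ψ i hi _ hF ?_
  rwa [← A.rank_apply g, g.apply_symm_apply]

lemma induction_on_connected {Ψ₁ Ψ₂ : Flag Face} (p : Flag Face → Prop) (h₁ : p Ψ₁)
    (hstep : ∀ (Ψ : Flag Face) (i : ℕ), i < n →
      (∀ F ∈ Ψ₁, F ∈ Ψ₂ → A.rank F ≠ i) → p Ψ → p (A.adj Ψ i)) : p Ψ₂ := by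
  obtain ⟨l, c, hc0, hcl, hc⟩ := A.connected Ψ₁ Ψ₂
  suffices ∀ m ≤ l, p (c m) from hcl ▸ this l le_rfl
  intro m
  induction m with
  | zero => exact fun _ => hc0 ▸ h₁
  | succ m ih =>
    intro hm
    obtain ⟨i, hi, hcm, hcommon⟩ := hc m (by omega)
    exact hcm ▸ hstep _ i hi hcommon (ih (by omega))

lemma SameOrbit.symm {Φ Ψ : Flag Face} (h : SameOrbit Φ Ψ) : SameOrbit Ψ Φ := by
  obtain ⟨g, rfl⟩ := h
  exact ⟨g⁻¹, inv_smul_smul g Φ⟩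

lemma SameOrbit.trans {Φ Ψ X : Flag Face} (h : SameOrbit Φ Ψ) (h' : SameOrbit Ψ X) :
    SameOrbit Φ X := by
  obtain ⟨g, rfl⟩ := h
  obtain ⟨g', rfl⟩ := h'
  exact ⟨g' * g, mul_smul g' g Φ⟩

lemma SameOrbit.adj {Φ Ψ : Flag Face} (h : SameOrbit Φ Ψ) {k : ℕ} (hk : k < n) :
    SameOrbit (A.adj Φ k) (A.adj Ψ k) := by
  obtain ⟨g, rfl⟩ := h
  exact ⟨g, A.smul_adj g Φ hk⟩

variable {A} in
lemma TwoOrbit.sameOrbit_or_sameOrbit (h2 : A.TwoOrbit) {Φ Ψ : Flag Face}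
    (hΦΨ : ¬ SameOrbit Φ Ψ) (X : Flag Face) : SameOrbit X Φ ∨ SameOrbit X Ψ := by
  obtain ⟨Φ₀, Ψ₀, -, hcover⟩ := h2
  rcases hcover Φ with hΦ | hΦ <;> rcases hcover Ψ with hΨ | hΨ <;>
    rcases hcover X with hX | hX <;>
    first
      | exact absurd (hΦ.trans hΨ.symm) hΦΨ
      | exact Or.inl (hX.trans hΦ.symm)
      | exact Or.inr (hX.trans hΨ.symm)

lemma mem_of_sameOrbit_adj {I : Set ℕ} (h2 : A.TwoOrbit) (hI : A.InClass I) {k : ℕ}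
    (hk : k < n) {Φ₀ : Flag Face} (h : SameOrbit Φ₀ (A.adj Φ₀ k)) : k ∈ I := by
  rw [hI.2 k hk]
  intro Ψ
  by_contra hΨ
  rcases h2.sameOrbit_or_sameOrbit hΨ Φ₀ with hΦ₀ | hΦ₀
  · exact hΨ ((hΦ₀.symm.trans h).trans (hΦ₀.adj A hk))
  · have h' := hΦ₀.adj A hk
    rw [A.adj_adj Ψ hk] at h'
    exact hΨ ((h'.symm.trans h.symm).trans hΦ₀)

section Subchain

variable (Φ : Flag Face) (r s : ℤ)

/-- `Φ_J ⊆ Ψ`, where `J = N \ {r+1, …, s-1}`. -/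
def ContainsSubchain (Ψ : Flag Face) : Prop :=
  ∀ j : ℕ, j < n → ¬(r < (j : ℤ) ∧ (j : ℤ) < s) → A.faceAt Φ (j : ℤ) ∈ Ψ

/-- The stabilizer `Γ_J` of `Φ_J`. -/
def subchainStab : Subgroup (Face ≃o Face) :=
  ⨅ j ∈ {j : ℕ | j < n ∧ ¬(r < (j : ℤ) ∧ (j : ℤ) < s)}, A.faceStab (A.faceAt Φ (j : ℤ))

variable {A Φ r s}

lemma containsSubchain_self : A.ContainsSubchain Φ r s Φ :=
  fun j hj _ => A.faceAt_mem Φ j (by omega) (by omega)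

lemma ContainsSubchain.adj {Ψ : Flag Face} (hΨ : A.ContainsSubchain Φ r s Ψ) {i : ℕ}
    (hi : i < n) (hirs : r < (i : ℤ) ∧ (i : ℤ) < s) : A.ContainsSubchain Φ r s (A.adj Ψ i) := by
  intro j hj hjrs
  refine A.adj_mem Ψ i hi _ (hΨ j hj hjrs) ?_
  rw [A.faceAt_rank Φ j (by omega) (by omega)]
  rintro hji
  exact hjrs (by rwa [Nat.cast_inj.1 hji])

lemma ContainsSubchain.of_le_or_ge {Ψ : Flag Face} (hr : -1 ≤ r) (hrs : r ≤ s)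
    (hs : s ≤ (n : ℤ)) (hΨ : ∀ F ∈ Φ, F ≤ A.faceAt Φ r ∨ A.faceAt Φ s ≤ F → F ∈ Ψ) :
    A.ContainsSubchain Φ r s Ψ := by
  intro j hj hjrs
  refine hΨ _ (A.faceAt_mem Φ j (by omega) (by omega)) ?_
  rcases le_or_gt (j : ℤ) r with hjr | hrj
  · exact Or.inl (A.faceAt_le_faceAt Φ (by omega) hjr (by omega))
  · exact Or.inr (A.faceAt_le_faceAt Φ (by omega) (not_lt.1 (hjrs ∘ And.intro hrj)) (by omega))

lemma mem_subchainStab_of_smul_eq {g : Face ≃o Face} {Ψ Ψ' : Flag Face}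
    (hΨ : A.ContainsSubchain Φ r s Ψ) (hΨ' : A.ContainsSubchain Φ r s Ψ') (hg : g • Ψ = Ψ') :
    g ∈ A.subchainStab Φ r s := by
  simp only [subchainStab, Subgroup.mem_iInf]
  rintro j ⟨hj, hjrs⟩
  exact A.apply_eq_self_of_mem_smul (hΨ j hj hjrs) (hg ▸ hΨ' j hj hjrs)

lemma exists_mem_subchainStab_smul_eq {I : Set ℕ} (hI : A.InClass I)
    (hsub : ∀ k : ℕ, k < n → r < (k : ℤ) → (k : ℤ) < s → k ∈ I) {Ψ₁ Ψ₂ : Flag Face}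
    (h₁ : A.ContainsSubchain Φ r s Ψ₁) (h₂ : A.ContainsSubchain Φ r s Ψ₂) :
    ∃ g ∈ A.subchainStab Φ r s, g • Ψ₁ = Ψ₂ := by
  refine (A.induction_on_connected
    (fun Ψ => A.ContainsSubchain Φ r s Ψ ∧ ∃ g ∈ A.subchainStab Φ r s, g • Ψ₁ = Ψ)
    ⟨h₁, 1, one_mem _, one_smul _ _⟩ ?_).2
  rintro _ i hi hcommon ⟨hΨ, g, hg, rfl⟩
  have hirs : r < (i : ℤ) ∧ (i : ℤ) < s := by
    by_contra hirs
    exact hcommon _ (h₁ i hi hirs) (h₂ i hi hirs) (A.faceAt_rank Φ i (by omega) (by omega))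
  have hadj := hΨ.adj hi hirs
  obtain ⟨h, hh⟩ := (hI.2 i hi).1 (hsub i hi hirs.1 hirs.2) (g • Ψ₁)
  exact ⟨hadj, h * g, mul_mem (mem_subchainStab_of_smul_eq hΨ hadj hh) hg, by rw [mul_smul, hh]⟩

/-- Two extensions of flags of the section `Φ_s/Φ_r` both contain `Φ_r` and `Φ_s`, so an
automorphism relating them fixes both and restricts to the section. -/
lemma exists_sectionIso_smul_eq {I : Set ℕ} (hI : A.InClass I) (hr : -1 ≤ r) (hrs : r ≤ s)
    (hs : s ≤ (n : ℤ)) (hsub : ∀ k : ℕ, k < n → r < (k : ℤ) → (k : ℤ) < s → k ∈ I)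
    (Φ' Ψ' : Flag {H : Face // A.faceAt Φ r ≤ H ∧ H ≤ A.faceAt Φ s}) :
    ∃ e : {H : Face // A.faceAt Φ r ≤ H ∧ H ≤ A.faceAt Φ s} ≃o
        {H : Face // A.faceAt Φ r ≤ H ∧ H ≤ A.faceAt Φ s}, e • Φ' = Ψ' := by
  have hab : A.faceAt Φ r ≤ A.faceAt Φ s := A.faceAt_le_faceAt Φ hr hrs hs
  obtain ⟨M₁, hΦM₁, hM₁⟩ := Flag.exists_extend_interval Φ Φ'
  obtain ⟨M₂, hΦM₂, hM₂⟩ := Flag.exists_extend_interval Φ Ψ'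
  obtain ⟨g, -, hg⟩ := exists_mem_subchainStab_smul_eq hI hsub
    (ContainsSubchain.of_le_or_ge hr hrs hs hΦM₁) (ContainsSubchain.of_le_or_ge hr hrs hs hΦM₂)
  have hfix : ∀ x : {H : Face // A.faceAt Φ r ≤ H ∧ H ≤ A.faceAt Φ s},
      (∀ Ψ : Flag {H : Face // A.faceAt Φ r ≤ H ∧ H ≤ A.faceAt Φ s}, x ∈ Ψ) → g x.1 = x.1 :=
    fun x hx => A.apply_eq_self_of_mem_smul ((hM₁ x).2 (hx Φ')) (hg ▸ (hM₂ x).2 (hx Ψ'))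
  have ha := hfix ⟨_, le_rfl, hab⟩ fun _ => Flag.mem_of_forall_le fun y => y.2.1
  have hb := hfix ⟨_, hab, le_rfl⟩ fun _ => Flag.mem_of_forall_ge fun y => y.2.2
  exact ⟨g.restrictInterval ha hb, g.restrictInterval_smul_eq ha hb hg hM₁ hM₂⟩

end Subchain

end AbstractPolytope

open AbstractPolytope in
/-- With `J = N \ {r+1,...,s-1}`, the stabilizer `Γ_J` of `Φ_J` acts
flag-transitively on the section `Φ_s/Φ_r` (whose flags correspond to the flags of `P`
containing `Φ_J`) if and only if `{r+1,...,s-1} ⊆ I`; and in that case the section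
`Φ_s/Φ_r` is a regular polytope (its automorphism group is flag-transitive). -/
theorem stmt13 {n : ℕ} {Face : Type*} [PartialOrder Face] (A : AbstractPolytope n Face)
    (I : Set ℕ) (h2 : A.TwoOrbit) (hI : A.InClass I) (Φ : Flag Face)
    (r s : ℤ) (hr : -1 ≤ r) (hrs : r ≤ s) (hs : s ≤ (n : ℤ)) :
    ((∀ Ψ₁ Ψ₂ : Flag Face,
        (∀ j : ℕ, j < n → ¬(r < (j : ℤ) ∧ (j : ℤ) < s) → A.faceAt Φ (j : ℤ) ∈ Ψ₁) →
        (∀ j : ℕ, j < n → ¬(r < (j : ℤ) ∧ (j : ℤ) < s) → A.faceAt Φ (j : ℤ) ∈ Ψ₂) →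
        ∃ g ∈ ⨅ j ∈ {j : ℕ | j < n ∧ ¬(r < (j : ℤ) ∧ (j : ℤ) < s)},
            A.faceStab (A.faceAt Φ (j : ℤ)),
          g • Ψ₁ = Ψ₂)
      ↔ (∀ k : ℕ, k < n → r < (k : ℤ) → (k : ℤ) < s → k ∈ I))
    ∧ ((∀ k : ℕ, k < n → r < (k : ℤ) → (k : ℤ) < s → k ∈ I) →
        ∀ Φ' Ψ' : Flag {H : Face // A.faceAt Φ r ≤ H ∧ H ≤ A.faceAt Φ s},
          ∃ e : {H : Face // A.faceAt Φ r ≤ H ∧ H ≤ A.faceAt Φ s} ≃o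
              {H : Face // A.faceAt Φ r ≤ H ∧ H ≤ A.faceAt Φ s},
            e • Φ' = Ψ') := by
  refine ⟨⟨fun htrans k hk hrk hks => ?_, fun hsub _ _ h₁ h₂ =>
    exists_mem_subchainStab_smul_eq hI hsub h₁ h₂⟩,
    fun hsub => exists_sectionIso_smul_eq hI hr hrs hs hsub⟩
  obtain ⟨g, -, hg⟩ :=
    htrans Φ (A.adj Φ k) containsSubchain_self (containsSubchain_self.adj hk ⟨hrk, hks⟩)
  exact A.mem_of_sameOrbit_adj h2 hI hk ⟨g, hg⟩
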